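/- arXiv:2407.14370 — 4 statements merged into one kernel-verified Lean document; each statement's English description precedes it below -/
import Mathlib

section
/- With M = GL_n(ℤ_p) or M = SL_n(ℤ_p) and G ≤ M, the index i_k divides i_{k+1} for every k ≥ 1, and the sequence u_k = i_{k+1}/i_k of positive integers satisfies u_{k+1} ∣ u_k for every k ≥ 1 if p is odd, and for every k ≥ 2 if p = 2. -/
open scoped MatrixGroups

/-- The reduction map `GL_n(ℤ_p) → GL_n(ℤ/p^kℤ)` induced by entrywise reduction. -/
noncomputable def glRed (p : ℕ) [Fact p.Prime] (n k : ℕ) :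
    GL (Fin n) ℤ_[p] →* GL (Fin n) (ZMod (p ^ k)) :=
  Units.map ((PadicInt.toZModPow k).mapMatrix).toMonoidHom

/-- `i_k = [M_k : G_k]`, where `M_k` and `G_k` are the images of `M` and `G` in
`GL_n(ℤ/p^kℤ)`. -/
noncomputable def redIndex (p : ℕ) [Fact p.Prime] (n : ℕ)
    (M G : Subgroup (GL (Fin n) ℤ_[p])) (k : ℕ) : ℕ :=
  (Subgroup.map (glRed p n k) G).relIndex (Subgroup.map (glRed p n k) M)

/-!
Let `Γ_k` (`congrSubgroup`) be the kernel of reduction mod `p^k`. Then `i_k = [MΓ_k : GΓ_k]`, and for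
`k ≥ 1` the map `1 + p^k Y ↦ Y mod p` (`congrLog`) is a homomorphism `Γ_k → M_n(𝔽_p)` with kernel
`Γ_{k+1}`. Writing `L_k(H)` (`congrImage`) for the image of `H ∩ Γ_k`, this gives
`i_{k+1} = [L_k(M) : L_k(G)] · i_k`, so `u_k = [L_k(M) : L_k(G)]`.
If `(p - 1)k ≥ 2` then `(1 + p^k Y)^p = 1 + p^{k+1}(Y + pZ)`, so the `p`-th power map shows
`L_k(G) ⊆ L_{k+1}(G)`. On the other hand `L_k(M)` does not depend on `k`: it is all of `M_n(𝔽_p)` for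
`GL_n` and the trace-zero matrices for `SL_n`. Hence `u_{k+1} = [L_k(M) : L_{k+1}(G)]` divides `u_k`.
-/

namespace Subgroup

variable {A B : Type*} [Group A] [Group B]

theorem sup_inf_eq_inf_sup_of_le {N' N : Subgroup A} [N'.Normal] (G : Subgroup A) (h : N' ≤ N) :
    (G ⊔ N') ⊓ N = (G ⊓ N) ⊔ N' :=
  SetLike.coe_injective <| by
    rw [mul_normal, coe_inf, mul_normal, inf_comm G, inf_mul_assoc _ _ _ h, Set.inter_comm]

theorem relIndex_eq_relIndex_inf_mul_relIndex_sup {X Y N : Subgroup A} [N.Normal]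
    [N.FiniteIndex] (hXY : X ≤ Y) :
    X.relIndex Y = (X ⊓ N).relIndex (Y ⊓ N) * (X ⊔ N).relIndex (Y ⊔ N) := by
  have hX : (X ⊓ N).relIndex X * X.relIndex Y = (X ⊓ N).relIndex Y :=
    relIndex_mul_relIndex _ _ _ inf_le_left hXY
  have hY : (X ⊓ N).relIndex (Y ⊓ N) * (Y ⊓ N).relIndex Y = (X ⊓ N).relIndex Y :=
    relIndex_mul_relIndex _ _ _ (inf_le_inf_right N hXY) inf_le_left
  have hN : N.relIndex (X ⊔ N) * (X ⊔ N).relIndex (Y ⊔ N) = N.relIndex (Y ⊔ N) :=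
    relIndex_mul_relIndex _ _ _ le_sup_right (sup_le_sup_right hXY N)
  rw [inf_relIndex_left] at hX hY
  rw [relIndex_sup_right, relIndex_sup_right] at hN
  have := isFiniteRelIndex_of_finiteIndex (H := N) (K := X)
  refine Nat.eq_of_mul_eq_mul_left (Nat.pos_of_ne_zero (relIndex_ne_zero (H := N) (K := X))) ?_
  rw [hX, ← hY, ← hN]
  ring

theorem relIndex_map_subgroupOf {N N' : Subgroup A} [N'.Normal] (hN' : N' ≤ N) {f : N →* B}
    (hf : f.ker = N'.subgroupOf N) (G M : Subgroup A) :
    ((G.subgroupOf N).map f).relIndex ((M.subgroupOf N).map f) =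
      ((G ⊔ N') ⊓ N).relIndex ((M ⊔ N') ⊓ N) := by
  have key : ∀ H : Subgroup A, H.subgroupOf N ⊔ f.ker = ((H ⊔ N') ⊓ N).subgroupOf N := by
    intro H
    rw [sup_inf_eq_inf_sup_of_le H hN', subgroupOf_sup inf_le_right hN', hf,
      inf_subgroupOf_right]
  rw [relIndex_map_map, key, key, relIndex_subgroupOf inf_le_right]

theorem relIndex_map_eq_mul_relIndex_map {B' C : Type*} [Group B'] [Group C] {f : A →* B}
    {f' : A →* B'} (hker : f'.ker ≤ f.ker) [f.ker.FiniteIndex] {g : f.ker →* C}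
    (hg : g.ker = f'.ker.subgroupOf f.ker) {G M : Subgroup A} (hGM : G ≤ M) :
    (G.map f').relIndex (M.map f') =
      ((G.subgroupOf f.ker).map g).relIndex ((M.subgroupOf f.ker).map g) *
        (G.map f).relIndex (M.map f) := by
  rw [relIndex_map_subgroupOf hker hg, relIndex_map_map f', relIndex_map_map f,
    relIndex_eq_relIndex_inf_mul_relIndex_sup (N := f.ker) (sup_le_sup_right hGM _),
    sup_assoc, sup_assoc, sup_of_le_right hker]

end Subgroup

theorem Matrix.exists_eq_smul_iff {R ι : Type*} [CommSemiring R] {c : R} {E : Matrix ι ι R} :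
    (∃ Y, E = c • Y) ↔ ∀ i j, c ∣ E i j := by
  refine ⟨?_, fun h => ?_⟩
  · rintro ⟨Y, rfl⟩ i j
    exact dvd_mul_right _ _
  · choose Y hY using h
    exact ⟨Matrix.of Y, Matrix.ext hY⟩

theorem Nat.Prime.pow_dvd_pow_mul_choose {p k : ℕ} (hp : p.Prime) (hk : 2 ≤ (p - 1) * k) (j : ℕ) :
    p ^ (k + 2) ∣ p ^ (k * (j + 2)) * p.choose (j + 2) := by
  have hk1 : 1 ≤ k := by rcases k with _ | k <;> simp_all
  rcases lt_trichotomy (j + 2) p with hj | rfl | hj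
  · rw [pow_succ]
    exact mul_dvd_mul (pow_dvd_pow p (by nlinarith)) (hp.dvd_choose_self (by omega) hj)
  · rw [Nat.choose_self, mul_one]
    exact pow_dvd_pow _ (by rw [show j + 2 - 1 = j + 1 by omega] at hk; nlinarith)
  · simp [Nat.choose_eq_zero_of_lt hj]

open Finset in
theorem exists_one_add_smul_pow_prime {R A : Type*} [CommRing R] [Ring A] [Algebra R A]
    {p k : ℕ} (hp : p.Prime) (hk : 2 ≤ (p - 1) * k) (Y : A) :
    ∃ Z : A, (1 + (p : R) ^ k • Y) ^ p = 1 + (p : R) ^ (k + 1) • (Y + (p : R) • Z) := by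
  choose c hc using hp.pow_dvd_pow_mul_choose hk
  refine ⟨∑ j ∈ range (p - 1), (c j : R) • Y ^ (j + 2), ?_⟩
  rw [add_comm 1, (Commute.one_right _).add_pow, show p + 1 = p - 1 + 2 by have := hp.two_le; omega,
    sum_range_succ', sum_range_succ']
  simp only [one_pow, mul_one, pow_zero, Nat.choose_zero_right, Nat.choose_one_right, Nat.cast_one,
    zero_add, pow_one, smul_add, smul_sum, smul_smul, smul_pow]
  have hterm : ∀ j, ((p : R) ^ k) ^ (j + 2) • Y ^ (j + 2) * (p.choose (j + 2) : A) =
      ((p : R) ^ (k + 1) * ((p : R) * c j)) • Y ^ (j + 2) := by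
    intro j
    rw [← nsmul_eq_mul', ← Nat.cast_smul_eq_nsmul R, smul_smul, ← pow_mul]
    congr 1
    have := congrArg (Nat.cast : ℕ → R) (hc j)
    push_cast at this
    linear_combination this
  simp only [hterm]
  rw [smul_mul_assoc, ← nsmul_eq_mul', ← Nat.cast_smul_eq_nsmul R, smul_smul, pow_succ]
  abel

namespace PadicInt

variable {p : ℕ} [Fact p.Prime]

theorem toZMod_eq_zero_iff {x : ℤ_[p]} : toZMod x = 0 ↔ (p : ℤ_[p]) ∣ x := by
  rw [← RingHom.mem_ker, ker_toZMod, maximalIdeal_eq_span_p, Ideal.mem_span_singleton]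

theorem toZModPow_eq_zero_iff {k : ℕ} {x : ℤ_[p]} : toZModPow k x = 0 ↔ (p : ℤ_[p]) ^ k ∣ x := by
  rw [← RingHom.mem_ker, ker_toZModPow, Ideal.mem_span_singleton]

theorem isUnit_iff_toZMod_ne_zero {x : ℤ_[p]} : IsUnit x ↔ toZMod x ≠ 0 := by
  rw [← IsLocalRing.notMem_maximalIdeal, ← ker_toZMod, RingHom.mem_ker]

theorem map_toZMod_eq_zero_iff {ι : Type*} {Y : Matrix ι ι ℤ_[p]} :
    Y.map toZMod = 0 ↔ ∃ W, Y = (p : ℤ_[p]) • W := by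
  rw [Matrix.exists_eq_smul_iff, ← Matrix.ext_iff]
  simp only [Matrix.map_apply, Matrix.zero_apply, toZMod_eq_zero_iff]

theorem map_toZMod_pow_smul {ι : Type*} {k : ℕ} [NeZero k] (W : Matrix ι ι ℤ_[p]) :
    ((p : ℤ_[p]) ^ k • W).map toZMod = 0 :=
  map_toZMod_eq_zero_iff.2 ⟨(p : ℤ_[p]) ^ (k - 1) • W, by
    rw [smul_smul, ← pow_succ', Nat.sub_add_cancel NeZero.one_le]⟩

theorem exists_map_toZMod_eq {ι : Type*} (X : Matrix ι ι (ZMod p)) :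
    ∃ Y : Matrix ι ι ℤ_[p], Y.map toZMod = X :=
  ⟨X.map fun a => ((a.val : ℕ) : ℤ_[p]), by ext; simp⟩

end PadicInt

open PadicInt

section Congruence

variable {p : ℕ} [Fact p.Prime] {n : ℕ}

variable (p n) in
noncomputable def congrSubgroup (k : ℕ) : Subgroup (GL (Fin n) ℤ_[p]) := (glRed p n k).ker

theorem mem_congrSubgroup_iff {k : ℕ} {g : GL (Fin n) ℤ_[p]} :
    g ∈ congrSubgroup p n k ↔ ∃ Y, (g : Matrix (Fin n) (Fin n) ℤ_[p]) = 1 + (p : ℤ_[p]) ^ k • Y := by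
  rw [congrSubgroup, MonoidHom.mem_ker, Units.ext_iff]
  change (toZModPow k).mapMatrix (g : Matrix (Fin n) (Fin n) ℤ_[p]) = 1 ↔ _
  rw [← sub_eq_zero, ← map_one (toZModPow k).mapMatrix, ← map_sub, ← Matrix.ext_iff]
  simp only [RingHom.mapMatrix_apply, Matrix.map_apply, Matrix.zero_apply, toZModPow_eq_zero_iff,
    ← Matrix.exists_eq_smul_iff, sub_eq_iff_eq_add']

theorem congrSubgroup_antitone : Antitone (congrSubgroup p n) := by
  intro k l hkl g hg
  obtain ⟨Y, hY⟩ := mem_congrSubgroup_iff.1 hg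
  refine mem_congrSubgroup_iff.2 ⟨(p : ℤ_[p]) ^ (l - k) • Y, ?_⟩
  rw [hY, smul_smul, ← pow_add, Nat.add_sub_cancel' hkl]

instance (k : ℕ) : (congrSubgroup p n k).FiniteIndex := by
  have : NeZero (p ^ k) := ⟨pow_ne_zero _ (Fact.out : p.Prime).ne_zero⟩
  rw [Subgroup.finiteIndex_iff, congrSubgroup, Subgroup.index_ker]
  exact Nat.card_pos.ne'

variable {k : ℕ}

noncomputable def congrQuot (g : congrSubgroup p n k) : Matrix (Fin n) (Fin n) ℤ_[p] :=
  (mem_congrSubgroup_iff.1 g.2).choose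

theorem coe_eq_one_add_congrQuot (g : congrSubgroup p n k) :
    ((g : GL (Fin n) ℤ_[p]) : Matrix (Fin n) (Fin n) ℤ_[p]) = 1 + (p : ℤ_[p]) ^ k • congrQuot g :=
  (mem_congrSubgroup_iff.1 g.2).choose_spec

theorem congrQuot_eq_of_coe_eq {g : congrSubgroup p n k} {Y : Matrix (Fin n) (Fin n) ℤ_[p]}
    (h : ((g : GL (Fin n) ℤ_[p]) : Matrix (Fin n) (Fin n) ℤ_[p]) = 1 + (p : ℤ_[p]) ^ k • Y) :
    congrQuot g = Y :=
  smul_right_injective _ (pow_ne_zero _ (Nat.cast_ne_zero.2 (Fact.out : p.Prime).ne_zero))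
    (add_left_cancel ((coe_eq_one_add_congrQuot g).symm.trans h))

variable (p n k) in
noncomputable def congrLog [NeZero k] :
    congrSubgroup p n k →* Multiplicative (Matrix (Fin n) (Fin n) (ZMod p)) where
  toFun g := .ofAdd ((congrQuot g).map toZMod)
  map_one' := by
    rw [congrQuot_eq_of_coe_eq (Y := 0) (by simp), Matrix.map_zero _ (map_zero _), ofAdd_zero]
  map_mul' g h := by
    have hgh : congrQuot (g * h) =
        congrQuot g + congrQuot h + (p : ℤ_[p]) ^ k • (congrQuot g * congrQuot h) := by
      apply congrQuot_eq_of_coe_eq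
      rw [Subgroup.coe_mul, Units.val_mul, coe_eq_one_add_congrQuot g, coe_eq_one_add_congrQuot h]
      simp only [add_mul, mul_add, one_mul, mul_one, smul_mul_smul_comm]
      module
    rw [hgh, ← ofAdd_add, Matrix.map_add _ (map_add _), Matrix.map_add _ (map_add _),
      map_toZMod_pow_smul, add_zero]

theorem congrLog_apply [NeZero k] (g : congrSubgroup p n k) :
    congrLog p n k g = .ofAdd ((congrQuot g).map toZMod) := rfl

theorem congrLog_eq_of_coe_eq [NeZero k] {g : congrSubgroup p n k}
    {Y : Matrix (Fin n) (Fin n) ℤ_[p]}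
    (h : ((g : GL (Fin n) ℤ_[p]) : Matrix (Fin n) (Fin n) ℤ_[p]) = 1 + (p : ℤ_[p]) ^ k • Y) :
    congrLog p n k g = .ofAdd (Y.map toZMod) := by
  rw [congrLog_apply, congrQuot_eq_of_coe_eq h]

theorem ker_congrLog [NeZero k] :
    (congrLog p n k).ker = (congrSubgroup p n (k + 1)).subgroupOf (congrSubgroup p n k) := by
  ext g
  rw [MonoidHom.mem_ker, congrLog_apply, Subgroup.mem_subgroupOf, mem_congrSubgroup_iff,
    ← ofAdd_zero, (Multiplicative.ofAdd).injective.eq_iff, map_toZMod_eq_zero_iff]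
  constructor
  · rintro ⟨W, hW⟩
    exact ⟨W, by rw [coe_eq_one_add_congrQuot, hW, smul_smul, ← pow_succ]⟩
  · rintro ⟨W, hW⟩
    exact ⟨W, congrQuot_eq_of_coe_eq (by rw [hW, smul_smul, ← pow_succ])⟩

variable (p n k) in
noncomputable def congrImage (H : Subgroup (GL (Fin n) ℤ_[p])) [NeZero k] :
    Subgroup (Multiplicative (Matrix (Fin n) (Fin n) (ZMod p))) :=
  (H.subgroupOf (congrSubgroup p n k)).map (congrLog p n k)

theorem exists_pow_prime_mem_congrSubgroup [NeZero k] (hk : 2 ≤ (p - 1) * k)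
    (g : congrSubgroup p n k) :
    ∃ h : (g : GL (Fin n) ℤ_[p]) ^ p ∈ congrSubgroup p n (k + 1),
      congrLog p n (k + 1) ⟨_, h⟩ = congrLog p n k g := by
  obtain ⟨Z, hZ⟩ := exists_one_add_smul_pow_prime (R := ℤ_[p]) (Fact.out : p.Prime) hk (congrQuot g)
  have hcoe : (((g : GL (Fin n) ℤ_[p]) ^ p : GL (Fin n) ℤ_[p]) : Matrix (Fin n) (Fin n) ℤ_[p]) =
      1 + (p : ℤ_[p]) ^ (k + 1) • (congrQuot g + (p : ℤ_[p]) • Z) := by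
    rw [Units.val_pow_eq_pow_val, coe_eq_one_add_congrQuot, hZ]
  refine ⟨mem_congrSubgroup_iff.2 ⟨_, hcoe⟩, ?_⟩
  rw [congrLog_eq_of_coe_eq hcoe, congrLog_apply, Matrix.map_add _ (map_add _),
    ← pow_one (p : ℤ_[p]), map_toZMod_pow_smul, add_zero]

theorem congrImage_le_congrImage_succ [NeZero k] (hk : 2 ≤ (p - 1) * k)
    (H : Subgroup (GL (Fin n) ℤ_[p])) : congrImage p n k H ≤ congrImage p n (k + 1) H := by
  rintro _ ⟨g, hg, rfl⟩
  obtain ⟨h, hlog⟩ := exists_pow_prime_mem_congrSubgroup hk g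
  exact ⟨⟨_, h⟩, H.pow_mem hg p, hlog⟩

theorem exists_coe_eq_one_add_smul [NeZero k] (Y : Matrix (Fin n) (Fin n) ℤ_[p]) :
    ∃ g : congrSubgroup p n k,
      ((g : GL (Fin n) ℤ_[p]) : Matrix (Fin n) (Fin n) ℤ_[p]) = 1 + (p : ℤ_[p]) ^ k • Y := by
  have hdet : IsUnit (1 + (p : ℤ_[p]) ^ k • Y).det := by
    rw [isUnit_iff_toZMod_ne_zero, RingHom.map_det, RingHom.mapMatrix_apply,
      Matrix.map_add _ (map_add _), map_toZMod_pow_smul, Matrix.map_one _ (map_zero _) (map_one _),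
      add_zero, Matrix.det_one]
    exact one_ne_zero
  exact ⟨⟨.mk'' _ hdet, mem_congrSubgroup_iff.2 ⟨Y, rfl⟩⟩, rfl⟩

theorem exists_det_one_add_pow_smul [NeZero k] (Y : Matrix (Fin n) (Fin n) ℤ_[p]) :
    ∃ e, (1 + (p : ℤ_[p]) ^ k • Y).det = 1 + (p : ℤ_[p]) ^ k * (Y.trace + p * e) := by
  obtain ⟨k, rfl⟩ := Nat.exists_eq_add_one_of_ne_zero (NeZero.ne k)
  obtain ⟨E, hE⟩ : ∃ E, (1 + (p : ℤ_[p]) ^ (k + 1) • Y).det =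
      1 + Y.trace * (p : ℤ_[p]) ^ (k + 1) + E * ((p : ℤ_[p]) ^ (k + 1)) ^ 2 :=
    ⟨_, Matrix.det_one_add_smul _ _⟩
  exact ⟨E * (p : ℤ_[p]) ^ k, by rw [hE]; ring⟩

theorem exists_mem_congrSubgroup_det_eq [Nonempty (Fin n)] (u : ℤ_[p]ˣ)
    (hu : (p : ℤ_[p]) ^ k ∣ u - 1) :
    ∃ d ∈ congrSubgroup p n k, Matrix.GeneralLinearGroup.det d = u := by
  obtain ⟨i⟩ := ‹Nonempty (Fin n)›
  obtain ⟨w, hw⟩ := hu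
  have hD : (1 + (p : ℤ_[p]) ^ k • Matrix.diagonal (Pi.single i w)).det = u := by
    rw [← Matrix.diagonal_one, ← Matrix.diagonal_smul, Matrix.diagonal_add, Matrix.det_diagonal,
      Finset.prod_eq_single i (fun j _ hj => by simp [hj]) (by simp)]
    simp [← hw]
  refine ⟨.mk'' _ (hD ▸ u.isUnit), mem_congrSubgroup_iff.2 ⟨_, rfl⟩, Units.ext ?_⟩
  rw [Matrix.GeneralLinearGroup.val_det_apply]
  exact hD

theorem congrImage_top [NeZero k] : congrImage p n k ⊤ = ⊤ := by
  refine eq_top_iff.2 fun x _ => ?_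
  obtain ⟨Y, hY⟩ := exists_map_toZMod_eq x.toAdd
  obtain ⟨g, hg⟩ := exists_coe_eq_one_add_smul (k := k) Y
  exact ⟨g, trivial, by rw [congrLog_eq_of_coe_eq hg, hY, ofAdd_toAdd]⟩

theorem mem_congrImage_det_ker_iff [NeZero k]
    {x : Multiplicative (Matrix (Fin n) (Fin n) (ZMod p))} :
    x ∈ congrImage p n k (Matrix.GeneralLinearGroup.det : GL (Fin n) ℤ_[p] →* ℤ_[p]ˣ).ker ↔
      x.toAdd.trace = 0 := by
  constructor
  · rintro ⟨g, hg, rfl⟩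
    obtain ⟨e, he⟩ := exists_det_one_add_pow_smul (k := k) (congrQuot g)
    have hdet : (1 + (p : ℤ_[p]) ^ k • congrQuot g).det = 1 := by
      rw [← coe_eq_one_add_congrQuot, ← Matrix.GeneralLinearGroup.val_det_apply,
        MonoidHom.mem_ker.1 (Subgroup.mem_subgroupOf.1 hg), Units.val_one]
    rw [he, add_eq_left, mul_eq_zero, or_iff_right (pow_ne_zero _ (Nat.cast_ne_zero.2
      (Fact.out : p.Prime).ne_zero)), add_eq_zero_iff_eq_neg, ← mul_neg] at hdet
    rw [congrLog_apply, toAdd_ofAdd, ← AddMonoidHom.map_trace, hdet, map_mul, map_natCast,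
      ZMod.natCast_self, zero_mul]
  · intro hx
    rcases isEmpty_or_nonempty (Fin n) with hn | hn
    · rw [show x = 1 from Multiplicative.toAdd.injective (Subsingleton.elim _ _)]
      exact one_mem _
    obtain ⟨Y, hY⟩ := exists_map_toZMod_eq x.toAdd
    obtain ⟨g, hg⟩ := exists_coe_eq_one_add_smul (k := k) Y
    obtain ⟨t, ht⟩ : (p : ℤ_[p]) ∣ Y.trace := by
      rw [← toZMod_eq_zero_iff, AddMonoidHom.map_trace, hY, hx]
    obtain ⟨e, he⟩ := exists_det_one_add_pow_smul (k := k) Y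
    set u := Matrix.GeneralLinearGroup.det (g : GL (Fin n) ℤ_[p])
    have hu : (u : ℤ_[p]) = 1 + (p : ℤ_[p]) ^ (k + 1) * (t + e) := by
      rw [Matrix.GeneralLinearGroup.val_det_apply, hg, he, ht]
      ring
    -- `g` need not have determinant `1`, but `det g ≡ 1 mod p^(k+1)`, so an element of `Γ_{k+1}`,
    -- which `congrLog` kills, corrects it.
    obtain ⟨d, hd, hdet⟩ := exists_mem_congrSubgroup_det_eq (n := n) (k := k + 1) u⁻¹
      ⟨-(u⁻¹ * (t + e) : ℤ_[p]), by linear_combination (-(u⁻¹ : ℤ_[p]ˣ) : ℤ_[p]) * hu + u.inv_mul⟩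
    let d' : congrSubgroup p n k := ⟨d, congrSubgroup_antitone k.le_succ hd⟩
    have hd' : d' ∈ (congrLog p n k).ker := by
      rw [ker_congrLog]
      exact hd
    refine ⟨g * d', ?_, ?_⟩
    · rw [SetLike.mem_coe, Subgroup.mem_subgroupOf, MonoidHom.mem_ker, Subgroup.coe_mul, map_mul]
      exact hdet.symm ▸ mul_inv_cancel u
    · rw [map_mul, hd', mul_one, congrLog_eq_of_coe_eq hg, hY, ofAdd_toAdd]

theorem congrImage_succ_eq [NeZero k] {M : Subgroup (GL (Fin n) ℤ_[p])}
    (hM : M = ⊤ ∨ M = (Matrix.GeneralLinearGroup.det : GL (Fin n) ℤ_[p] →* ℤ_[p]ˣ).ker) :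
    congrImage p n (k + 1) M = congrImage p n k M := by
  rcases hM with rfl | rfl
  · rw [congrImage_top, congrImage_top]
  · ext x
    rw [mem_congrImage_det_ker_iff, mem_congrImage_det_ker_iff]

theorem redIndex_succ [NeZero k] {M G : Subgroup (GL (Fin n) ℤ_[p])} (hGM : G ≤ M) :
    redIndex p n M G (k + 1) =
      (congrImage p n k G).relIndex (congrImage p n k M) * redIndex p n M G k :=
  Subgroup.relIndex_map_eq_mul_relIndex_map (f := glRed p n k) (f' := glRed p n (k + 1))
    (congrSubgroup_antitone k.le_succ) ker_congrLog hGM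

theorem redIndex_ne_zero (M G : Subgroup (GL (Fin n) ℤ_[p])) (k : ℕ) :
    redIndex p n M G k ≠ 0 := by
  have : NeZero (p ^ k) := ⟨pow_ne_zero _ (Fact.out : p.Prime).ne_zero⟩
  exact Subgroup.index_ne_zero_of_finite

theorem redIndex_succ_div [NeZero k] {M G : Subgroup (GL (Fin n) ℤ_[p])} (hGM : G ≤ M) :
    redIndex p n M G (k + 1) / redIndex p n M G k =
      (congrImage p n k G).relIndex (congrImage p n k M) := by
  rw [redIndex_succ hGM, Nat.mul_div_cancel _ (Nat.pos_of_ne_zero (redIndex_ne_zero M G k))]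

end Congruence

theorem statement_10_general (p : ℕ) [Fact p.Prime] (n : ℕ)
    (M G : Subgroup (GL (Fin n) ℤ_[p]))
    (hM : M = ⊤ ∨
      M = (Matrix.GeneralLinearGroup.det : GL (Fin n) ℤ_[p] →* ℤ_[p]ˣ).ker)
    (hGM : G ≤ M) :
    (∀ k : ℕ, 1 ≤ k → redIndex p n M G k ∣ redIndex p n M G (k + 1)) ∧
    (∀ k : ℕ, (Odd p ∧ 1 ≤ k) ∨ (p = 2 ∧ 2 ≤ k) →
      redIndex p n M G (k + 2) / redIndex p n M G (k + 1) ∣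
        redIndex p n M G (k + 1) / redIndex p n M G k) := by
  refine ⟨fun k hk => ?_, fun k hk => ?_⟩
  · have : NeZero k := ⟨by omega⟩
    exact Dvd.intro_left _ (redIndex_succ hGM).symm
  · have hk' : 2 ≤ (p - 1) * k := by
      rcases hk with ⟨hp, hk⟩ | ⟨rfl, hk⟩
      · have := (Fact.out : p.Prime).two_le
        have := Nat.odd_iff.1 hp
        exact le_trans (by omega) (Nat.mul_le_mul_left (p - 1) hk)
      · omega
    have : NeZero k := ⟨by rintro rfl; simp at hk'⟩
    change redIndex p n M G (k + 1 + 1) / _ ∣ _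
    rw [redIndex_succ_div hGM, redIndex_succ_div hGM, congrImage_succ_eq hM]
    exact Subgroup.relIndex_dvd_of_le_left _ (congrImage_le_congrImage_succ hk' G)

theorem statement_10 (p : ℕ) [Fact p.Prime] (n : ℕ) (hn : 1 ≤ n)
    (M G : Subgroup (GL (Fin n) ℤ_[p]))
    (hM : M = ⊤ ∨
      M = (Matrix.GeneralLinearGroup.det : GL (Fin n) ℤ_[p] →* ℤ_[p]ˣ).ker)
    (hGM : G ≤ M) :
    (∀ k : ℕ, 1 ≤ k → redIndex p n M G k ∣ redIndex p n M G (k + 1)) ∧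
    (∀ k : ℕ, (Odd p ∧ 1 ≤ k) ∨ (p = 2 ∧ 2 ≤ k) →
      redIndex p n M G (k + 2) / redIndex p n M G (k + 1) ∣
        redIndex p n M G (k + 1) / redIndex p n M G k) :=
  statement_10_general p n M G hM hGM
end

section
/- Let M = GL_n(ℤ_p) or M = SL_n(ℤ_p), let G ≤ M, and let k ≥ 1 if p is odd, k ≥ 2 if p = 2. If the reduction homomorphism G_{k+1} → G_k is an isomorphism (equivalently #G_{k+1} = #G_k), then the reduction homomorphisms G_{s+1} → G_s are isomorphisms for all s with 1 ≤ s ≤ k if p is odd, and for all s with 2 ≤ s ≤ k if p = 2. -/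
open scoped MatrixGroups

-- binomial lemma
lemma binom_key {R : Type*} [CommRing R] {n : ℕ} (P s : ℕ) (hP : P.Prime)
    (hs1 : 1 ≤ s) (hsp : s + 2 ≤ s * P) (hR : (P : R) ^ (s + 2) = 0)
    (B : Matrix (Fin n) (Fin n) R) :
    (1 + (P : R) ^ s • B) ^ P = 1 + (P : R) ^ (s + 1) • B := by
  set x : Matrix (Fin n) (Fin n) R := (P : R) ^ s • B with hx
  have hc : Commute x (1 : Matrix (Fin n) (Fin n) R) := Commute.one_right x
  rw [add_comm, hc.add_pow]
  obtain ⟨q, hq⟩ : ∃ q, P = q + 2 := ⟨P - 2, by have := hP.two_le; omega⟩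
  have hterm : ∀ m, 2 ≤ m → m ≤ P → x ^ m * (P.choose m : Matrix (Fin n) (Fin n) R) = 0 := by
    intro m hm2 hmP
    have hx : x ^ m = ((P : R) ^ s) ^ m • B ^ m := smul_pow _ _ _
    have hscal : ((P : R) ^ s) ^ m * (P.choose m : R) = 0 := by
      rcases eq_or_lt_of_le hmP with he | hlt
      · subst he
        rw [Nat.choose_self, Nat.cast_one, mul_one, ← pow_mul]
        exact pow_eq_zero_of_le (le_trans hsp (Nat.mul_le_mul_left s le_rfl)) hR
      · obtain ⟨d, hd⟩ := hP.dvd_choose_self (by omega) hlt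
        rw [hd, Nat.cast_mul, ← mul_assoc, ← pow_mul, ← pow_succ]
        have h0 : (P : R) ^ (s * m + 1) = 0 := by
          refine pow_eq_zero_of_le ?_ hR
          nlinarith
        rw [h0, zero_mul]
    calc x ^ m * (P.choose m : Matrix (Fin n) (Fin n) R)
        = (((P : R) ^ s) ^ m * (P.choose m : R)) • B ^ m := by
          rw [hx, smul_mul_assoc, mul_smul]
          congr 1
          rw [← (Nat.cast_commute (P.choose m) (B ^ m)).eq, ← nsmul_eq_mul,
            ← Nat.cast_smul_eq_nsmul R]
      _ = 0 := by rw [hscal, zero_smul]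
  rw [show P + 1 = (q + 1) + 1 + 1 by omega, Finset.sum_range_succ', Finset.sum_range_succ']
  have hz : ∀ i ∈ Finset.range (q + 1),
      x ^ (i + 1 + 1) * (1 : Matrix (Fin n) (Fin n) R) ^ (P - (i + 1 + 1)) *
        (P.choose (i + 1 + 1) : Matrix (Fin n) (Fin n) R) = 0 := by
    intro i hi
    rw [Finset.mem_range] at hi
    rw [one_pow, mul_one, hterm (i + 1 + 1) (by omega) (by omega)]
  rw [Finset.sum_eq_zero hz, zero_add]
  simp only [zero_add, pow_zero, pow_one, one_pow, one_mul, mul_one, Nat.choose_zero_right,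
    Nat.choose_one_right, Nat.cast_one]
  have h1 : x * (P : Matrix (Fin n) (Fin n) R) = (P : R) ^ (s + 1) • B := by
    rw [← (Nat.cast_commute P x).eq, ← nsmul_eq_mul, ← Nat.cast_smul_eq_nsmul R, hx,
      smul_smul, pow_succ, mul_comm]
  rw [h1, add_comm]

lemma map_smul_matrix {R S : Type*} [CommRing R] [CommRing S] (f : R →+* S) {n : ℕ}
    (c : R) (B : Matrix (Fin n) (Fin n) R) : (c • B).map f = f c • B.map f := by
  ext i j
  simp [Matrix.map_apply, Matrix.smul_apply, smul_eq_mul, map_mul]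

lemma glRed_val (p : ℕ) [Fact p.Prime] (n k : ℕ) (g : GL (Fin n) ℤ_[p]) :
    (glRed p n k g).val = (g.val).map (PadicInt.toZModPow k) := rfl

lemma glRed_eq_one_iff (p : ℕ) [Fact p.Prime] (n k : ℕ) (g : GL (Fin n) ℤ_[p]) :
    glRed p n k g = 1 ↔ (g.val).map (PadicInt.toZModPow k) = 1 := by
  rw [Units.ext_iff, glRed_val]; rfl

lemma step (p : ℕ) [Fact p.Prime] (n s : ℕ) (hs1 : 1 ≤ s) (hsp : s + 2 ≤ s * p)
    (g : GL (Fin n) ℤ_[p]) (h1 : glRed p n s g = 1) (h2 : glRed p n (s + 1) g ≠ 1) :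
    glRed p n (s + 1) (g ^ p) = 1 ∧ glRed p n (s + 2) (g ^ p) ≠ 1 := by
  have hp : p.Prime := Fact.out
  have hmap1 := (glRed_eq_one_iff p n s g).mp h1
  have hdvd : ∀ i j, (p : ℤ_[p]) ^ s ∣ (g.val i j - (1 : Matrix (Fin n) (Fin n) ℤ_[p]) i j) := by
    intro i j
    rw [← Ideal.mem_span_singleton, ← PadicInt.ker_toZModPow, RingHom.mem_ker, map_sub]
    have h' := congrFun (congrFun hmap1 i) j
    rw [Matrix.map_apply] at h'
    rw [h']
    by_cases hij : i = j <;> simp [Matrix.one_apply, hij]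
  choose B' hB' using fun i j => hdvd i j
  set B : Matrix (Fin n) (Fin n) ℤ_[p] := Matrix.of B' with hBdef
  have hB : ∀ i j, g.val i j - (1 : Matrix (Fin n) (Fin n) ℤ_[p]) i j = (p : ℤ_[p]) ^ s * B i j := hB'
  have hg : g.val = 1 + (p : ℤ_[p]) ^ s • B := by
    ext i j
    rw [Matrix.add_apply, Matrix.smul_apply, smul_eq_mul, ← hB i j]
    ring
  -- bad entry
  have hbad : ∃ i j, ¬ (p : ℤ_[p]) ∣ B i j := by
    by_contra hall
    push_neg at hall
    apply h2
    rw [glRed_eq_one_iff]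
    ext i j
    rw [Matrix.map_apply]
    obtain ⟨d, hd⟩ := hall i j
    have : g.val i j = (1 : Matrix (Fin n) (Fin n) ℤ_[p]) i j + (p : ℤ_[p]) ^ (s + 1) * d := by
      rw [← sub_eq_iff_eq_add', hB i j, hd]
      ring
    rw [this, map_add, map_mul, map_pow, map_natCast]
    have hz : ((p : ZMod (p ^ (s + 1)))) ^ (s + 1) = 0 := by
      rw [← Nat.cast_pow, ZMod.natCast_self]
    rw [hz, zero_mul, add_zero]
    by_cases hij : i = j <;> simp [Matrix.one_apply, hij]
  obtain ⟨i, j, hpB⟩ := hbad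
  have hzero1 : ((p : ZMod (p ^ (s + 1)))) ^ (s + 2) = 0 := by
    have h0 : ((p : ZMod (p ^ (s + 1)))) ^ (s + 1) = 0 := by
      rw [← Nat.cast_pow, ZMod.natCast_self]
    exact pow_eq_zero_of_le (by omega) h0
  have hzero2 : ((p : ZMod (p ^ (s + 2)))) ^ (s + 2) = 0 := by
    rw [← Nat.cast_pow, ZMod.natCast_self]
  have hval : ∀ t : ℕ, ((g ^ p).val).map (PadicInt.toZModPow t) =
      (1 + ((p : ZMod (p ^ t))) ^ s • (B.map (PadicInt.toZModPow t))) ^ p := by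
    intro t
    have hpow : (g ^ p).val = (g.val) ^ p := Units.val_pow_eq_pow_val g p
    rw [hpow, ← RingHom.mapMatrix_apply, map_pow, RingHom.mapMatrix_apply, hg]
    congr 1
    rw [Matrix.map_add _ (fun a b => map_add _ a b), map_smul_matrix, Matrix.map_one _ (map_zero _) (map_one _),
      map_pow, map_natCast]
  constructor
  · rw [glRed_eq_one_iff, hval (s + 1), binom_key p s hp hs1 hsp hzero1]
    have h0 : ((p : ZMod (p ^ (s + 1)))) ^ (s + 1) = 0 := by
      rw [← Nat.cast_pow, ZMod.natCast_self]
    rw [h0, zero_smul, add_zero]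
  · intro hcon
    rw [glRed_eq_one_iff, hval (s + 2), binom_key p s hp hs1 hsp hzero2] at hcon
    apply hpB
    have hentry := congrFun (congrFun hcon i) j
    rw [Matrix.add_apply, Matrix.smul_apply, Matrix.map_apply, smul_eq_mul] at hentry
    have hz : (PadicInt.toZModPow (s + 2)) ((p : ℤ_[p]) ^ (s + 1) * B i j) = 0 := by
      rw [map_mul, map_pow, map_natCast]
      exact (add_eq_left).mp hentry
    have hdvd2 : (p : ℤ_[p]) ^ (s + 2) ∣ (p : ℤ_[p]) ^ (s + 1) * B i j := by
      rw [← Ideal.mem_span_singleton, ← PadicInt.ker_toZModPow, RingHom.mem_ker]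
      exact hz
    have hpne : (p : ℤ_[p]) ^ (s + 1) ≠ 0 :=
      pow_ne_zero _ (Nat.cast_ne_zero.mpr hp.ne_zero)
    rw [pow_succ] at hdvd2
    exact (mul_dvd_mul_iff_left hpne).mp hdvd2

lemma glRed_comp (p : ℕ) [Fact p.Prime] (n s : ℕ) :
    (Units.map ((ZMod.castHom (pow_dvd_pow p (Nat.le_succ s))
        (ZMod (p ^ s))).mapMatrix).toMonoidHom).comp (glRed p n (s + 1)) = glRed p n s := by
  ext g i j
  simp only [glRed, MonoidHom.comp_apply, Units.coe_map, RingHom.toMonoidHom_eq_coe,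
    MonoidHom.coe_coe, RingHom.mapMatrix_apply, Matrix.map_map, Matrix.map_apply,
    Function.comp_apply]
  rw [← RingHom.comp_apply, PadicInt.zmod_cast_comp_toZModPow _ _ (Nat.le_succ s)]

lemma finite_red (p : ℕ) [Fact p.Prime] (n t : ℕ) (G : Subgroup (GL (Fin n) ℤ_[p])) :
    Finite ↥(Subgroup.map (glRed p n t) G) := by
  haveI : NeZero (p ^ t) := ⟨pow_ne_zero t (Fact.out : p.Prime).ne_zero⟩
  haveI : Finite (GL (Fin n) (ZMod (p ^ t))) := by
    haveI : Finite (Matrix (Fin n) (Fin n) (ZMod (p ^ t))) := by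
      unfold Matrix; infer_instance
    infer_instance
  exact Subtype.finite

theorem statement_11 (p : ℕ) [Fact p.Prime] (n : ℕ) (hn : 1 ≤ n)
    (M G : Subgroup (GL (Fin n) ℤ_[p]))
    (hM : M = ⊤ ∨
      M = (Matrix.GeneralLinearGroup.det : GL (Fin n) ℤ_[p] →* ℤ_[p]ˣ).ker)
    (hGM : G ≤ M)
    (k : ℕ) (hk : (Odd p ∧ 1 ≤ k) ∨ (p = 2 ∧ 2 ≤ k))
    (h : Nat.card ↥(Subgroup.map (glRed p n (k + 1)) G)
      = Nat.card ↥(Subgroup.map (glRed p n k) G)) :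
    ∀ s : ℕ, ((Odd p ∧ 1 ≤ s) ∨ (p = 2 ∧ 2 ≤ s)) → s ≤ k →
      Nat.card ↥(Subgroup.map (glRed p n (s + 1)) G)
        = Nat.card ↥(Subgroup.map (glRed p n s) G) := by
  have hp : p.Prime := Fact.out
  have hval : ∀ s : ℕ, ((Odd p ∧ 1 ≤ s) ∨ (p = 2 ∧ 2 ≤ s)) → 1 ≤ s ∧ s + 2 ≤ s * p := by
    rintro s (⟨ho, h1⟩ | ⟨rfl, h2⟩)
    · have hodd := Nat.odd_iff.mp ho
      have h2le := hp.two_le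
      have hp3 : 3 ≤ p := by omega
      refine ⟨h1, ?_⟩
      calc s + 2 ≤ s * 3 := by omega
        _ ≤ s * p := Nat.mul_le_mul_left s hp3
    · constructor <;> omega
  set Bad : ℕ → Prop :=
    fun s => ∃ g ∈ G, glRed p n s g = 1 ∧ glRed p n (s + 1) g ≠ 1 with hBadDef
  have hstep : ∀ s, 1 ≤ s → s + 2 ≤ s * p → Bad s → Bad (s + 1) := by
    rintro s h1 h2 ⟨g, hg, e1, e2⟩
    obtain ⟨f1, f2⟩ := step p n s h1 h2 g e1 e2
    exact ⟨g ^ p, pow_mem hg p, f1, f2⟩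
  have hmono : ∀ s : ℕ, ((Odd p ∧ 1 ≤ s) ∨ (p = 2 ∧ 2 ≤ s)) →
      ((Odd p ∧ 1 ≤ s + 1) ∨ (p = 2 ∧ 2 ≤ s + 1)) := by
    rintro s (⟨a, b⟩ | ⟨a, b⟩)
    · exact Or.inl ⟨a, by omega⟩
    · exact Or.inr ⟨a, by omega⟩
  have hup : ∀ s : ℕ, ((Odd p ∧ 1 ≤ s) ∨ (p = 2 ∧ 2 ≤ s)) → Bad s →
      ∀ t, s ≤ t → Bad t := by
    intro s hs hb t hst
    induction t, hst using Nat.le_induction with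
    | base => exact hb
    | succ t ht ih =>
      have hvt : ((Odd p ∧ 1 ≤ t) ∨ (p = 2 ∧ 2 ≤ t)) := by
        rcases hs with ⟨a, b⟩ | ⟨a, b⟩
        · exact Or.inl ⟨a, by omega⟩
        · exact Or.inr ⟨a, by omega⟩
      obtain ⟨w1, w2⟩ := hval t hvt
      exact hstep t w1 w2 ih
  -- reduction maps between consecutive levels
  haveI := fun t => finite_red p n t G
  have hGmap : ∀ s : ℕ, (Subgroup.map (glRed p n (s + 1)) G).map
      (Units.map ((ZMod.castHom (pow_dvd_pow p (Nat.le_succ s))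
        (ZMod (p ^ s))).mapMatrix).toMonoidHom) = Subgroup.map (glRed p n s) G := by
    intro s
    rw [Subgroup.map_map, glRed_comp]
  have hpi : ∀ s : ℕ, ∀ g : GL (Fin n) ℤ_[p],
      (Units.map ((ZMod.castHom (pow_dvd_pow p (Nat.le_succ s))
        (ZMod (p ^ s))).mapMatrix).toMonoidHom) (glRed p n (s + 1) g) = glRed p n s g := by
    intro s g
    exact DFunLike.congr_fun (glRed_comp p n s) g
  -- not Bad k
  have hnotk : ¬ Bad k := by
    rintro ⟨g, hg, e1, e2⟩
    set π : GL (Fin n) (ZMod (p ^ (k + 1))) →* GL (Fin n) (ZMod (p ^ k)) :=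
      Units.map ((ZMod.castHom (pow_dvd_pow p (Nat.le_succ k))
        (ZMod (p ^ k))).mapMatrix).toMonoidHom
    set F := π.subgroupMap (Subgroup.map (glRed p n (k + 1)) G) with hF
    have hsurj := π.subgroupMap_surjective (Subgroup.map (glRed p n (k + 1)) G)
    have hcard : Nat.card ↥(Subgroup.map (glRed p n (k + 1)) G)
        = Nat.card ↥((Subgroup.map (glRed p n (k + 1)) G).map π) := by
      rw [hGmap k]; exact h
    have hbij : Function.Bijective F :=
      (Nat.bijective_iff_surjective_and_card F).mpr ⟨hsurj, hcard⟩
    have hu : F ⟨glRed p n (k + 1) g, Subgroup.mem_map_of_mem _ hg⟩ = 1 := by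
      apply Subtype.ext
      show π (glRed p n (k + 1) g) = 1
      rw [hpi k g, e1]
    have := hbij.injective (hu.trans (map_one F).symm)
    exact e2 (congrArg Subtype.val this)
  intro s hs hsk
  have hnots : ¬ Bad s := fun hb => hnotk (hup s hs hb k hsk)
  set π : GL (Fin n) (ZMod (p ^ (s + 1))) →* GL (Fin n) (ZMod (p ^ s)) :=
    Units.map ((ZMod.castHom (pow_dvd_pow p (Nat.le_succ s))
      (ZMod (p ^ s))).mapMatrix).toMonoidHom
  set F := π.subgroupMap (Subgroup.map (glRed p n (s + 1)) G) with hF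
  have hsurj := π.subgroupMap_surjective (Subgroup.map (glRed p n (s + 1)) G)
  have hinj : Function.Injective F := by
    rw [injective_iff_map_eq_one]
    rintro ⟨u, hu⟩ hu1
    obtain ⟨g, hg, rfl⟩ := hu
    have h1 : glRed p n s g = 1 := by
      have : π (glRed p n (s + 1) g) = 1 := congrArg Subtype.val hu1
      rwa [hpi s g] at this
    have h2 : glRed p n (s + 1) g = 1 := by
      by_contra h2
      exact hnots ⟨g, hg, h1, h2⟩
    exact Subtype.ext h2
  have := Nat.card_eq_of_bijective F ⟨hinj, hsurj⟩
  rwa [hGmap s] at this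
end

section
/- For every integer m ≥ 2 and every integer n ≥ 1, the subgroup of GL₂(ℤ/mℤ) generated by the matrices [[0,−1],[1,1]] and [[0,1],[1,0]], and the subgroup generated by the matrices [[1,0],[0,−1]] and [[0,1],[−1,0]], are each split liftable modulo mn. -/
open scoped MatrixGroups

/-- The reduction map `GL₂(ℤ/nℤ) → GL₂(ℤ/mℤ)` for `m ∣ n`, induced by entrywise reduction. -/
def glRedZMod {m n : ℕ} (h : m ∣ n) : GL (Fin 2) (ZMod n) →* GL (Fin 2) (ZMod m) :=
  Units.map ((ZMod.castHom h (ZMod m)).mapMatrix).toMonoidHom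

/-- A subgroup `G` of `GL₂(ℤ/mℤ)` is split liftable modulo `mn`: there is a subgroup `G'` of
`GL₂(ℤ/mnℤ)` such that the entrywise reduction homomorphism `GL₂(ℤ/mnℤ) → GL₂(ℤ/mℤ)`
restricts to an isomorphism from `G'` onto `G`. -/
def SplitLiftable (m n : ℕ) (G : Subgroup (GL (Fin 2) (ZMod m))) : Prop :=
  ∃ G' : Subgroup (GL (Fin 2) (ZMod (m * n))),
    Subgroup.map (glRedZMod (dvd_mul_right m n)) G' = G ∧
    ∀ x ∈ G', ∀ y ∈ G',
      glRedZMod (dvd_mul_right m n) x = glRedZMod (dvd_mul_right m n) y → x = y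

/-- The matrix `[[0,-1],[1,1]]` as an element of `GL₂(R)`. -/
def glA (R : Type*) [CommRing R] : GL (Fin 2) R :=
  ⟨!![0, -1; 1, 1], !![1, 1; -1, 0],
    by ext i j; fin_cases i <;> fin_cases j <;> norm_num [Matrix.mul_apply, Fin.sum_univ_two],
    by ext i j; fin_cases i <;> fin_cases j <;> norm_num [Matrix.mul_apply, Fin.sum_univ_two]⟩

/-- The matrix `[[0,1],[1,0]]` as an element of `GL₂(R)`. -/
def glB (R : Type*) [CommRing R] : GL (Fin 2) R :=
  ⟨!![0, 1; 1, 0], !![0, 1; 1, 0],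
    by ext i j; fin_cases i <;> fin_cases j <;> norm_num [Matrix.mul_apply, Fin.sum_univ_two],
    by ext i j; fin_cases i <;> fin_cases j <;> norm_num [Matrix.mul_apply, Fin.sum_univ_two]⟩

/-- The matrix `[[1,0],[0,-1]]` as an element of `GL₂(R)`. -/
def glC (R : Type*) [CommRing R] : GL (Fin 2) R :=
  ⟨!![1, 0; 0, -1], !![1, 0; 0, -1],
    by ext i j; fin_cases i <;> fin_cases j <;> norm_num [Matrix.mul_apply, Fin.sum_univ_two],
    by ext i j; fin_cases i <;> fin_cases j <;> norm_num [Matrix.mul_apply, Fin.sum_univ_two]⟩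

/-- The matrix `[[0,1],[-1,0]]` as an element of `GL₂(R)`. -/
def glD (R : Type*) [CommRing R] : GL (Fin 2) R :=
  ⟨!![0, 1; -1, 0], !![0, -1; 1, 0],
    by ext i j; fin_cases i <;> fin_cases j <;> norm_num [Matrix.mul_apply, Fin.sum_univ_two],
    by ext i j; fin_cases i <;> fin_cases j <;> norm_num [Matrix.mul_apply, Fin.sum_univ_two]⟩

/-!
Both groups are reductions of finite subgroups of `GL₂(ℤ)`: `⟨A, B⟩` is dihedral of order 12 and
`⟨C, D⟩` dihedral of order 8, and all their entries lie in `{-1, 0, 1}`. For `m ≥ 3` no such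
matrix other than `1` is congruent to `1` modulo `m`, so reduction modulo `m` is injective on these
integral groups, and their reductions modulo `mn` are the required lifts. For `m = 2` one lifts
instead through `⟨[[0,-1],[1,-1]], B⟩ ≅ S₃ ≅ GL₂(𝔽₂)` and, as `C ≡ 1` and `D ≡ B`, through `⟨B⟩`.
-/

open Matrix

section GLMap

variable {R S : Type*} [CommRing R] [CommRing S] (f : R →+* S)

lemma GeneralLinearGroup.map_glA : GeneralLinearGroup.map f (glA R) = glA S := by
  ext i j; fin_cases i <;> fin_cases j <;> simp [glA]

lemma GeneralLinearGroup.map_glB : GeneralLinearGroup.map f (glB R) = glB S := by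
  ext i j; fin_cases i <;> fin_cases j <;> simp [glB]

lemma GeneralLinearGroup.map_glC : GeneralLinearGroup.map f (glC R) = glC S := by
  ext i j; fin_cases i <;> fin_cases j <;> simp [glC]

lemma GeneralLinearGroup.map_glD : GeneralLinearGroup.map f (glD R) = glD S := by
  ext i j; fin_cases i <;> fin_cases j <;> simp [glD]

end GLMap

lemma Units.val_mem_of_mem_closure {M : Type*} [Monoid M] {s : Set Mˣ} {T : Set M}
    (hT_one : 1 ∈ T) (hT_mul : ∀ x ∈ T, ∀ y ∈ T, x * y ∈ T)
    (hs : ∀ g ∈ s, (g : M) ∈ T ∧ ((g⁻¹ : Mˣ) : M) ∈ T) {g : Mˣ}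
    (hg : g ∈ Subgroup.closure s) : (g : M) ∈ T := by
  suffices (g : M) ∈ T ∧ ((g⁻¹ : Mˣ) : M) ∈ T from this.1
  induction hg using Subgroup.closure_induction with
  | mem g hg => exact hs g hg
  | one => simpa using hT_one
  | mul g h _ _ hg hh => exact ⟨hT_mul _ hg.1 _ hh.1, by simpa using hT_mul _ hh.2 _ hg.2⟩
  | inv g _ hg => simpa using hg.symm

lemma Int.eq_of_intCast_eq_of_natAbs_le_one {m : ℕ} (hm : 3 ≤ m) {a b : ℤ}
    (h : (a : ZMod m) = b) (ha : a.natAbs ≤ 1) (hb : b.natAbs ≤ 1) : a = b := by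
  have hdvd := (ZMod.intCast_eq_intCast_iff_dvd_sub a b m).mp h
  have := Int.eq_zero_of_abs_lt_dvd hdvd (by rw [Int.abs_eq_natAbs]; omega)
  omega

lemma Matrix.eq_one_of_map_intCast_eq_one {ι : Type*} [DecidableEq ι] {m : ℕ} (hm : 3 ≤ m)
    {X : Matrix ι ι ℤ} (hX : ∀ i j, (X i j).natAbs ≤ 1)
    (h : X.map (Int.cast : ℤ → ZMod m) = 1) : X = 1 := by
  ext i j
  have hij := congr_fun₂ h i j
  refine Int.eq_of_intCast_eq_of_natAbs_le_one hm ?_ (hX i j) ?_ <;>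
    by_cases i = j <;> simp_all [Matrix.one_apply]

lemma glRedZMod_comp_map_intCast (m n : ℕ) :
    (glRedZMod (dvd_mul_right m n)).comp (GeneralLinearGroup.map (Int.castRingHom (ZMod (m * n))))
      = GeneralLinearGroup.map (Int.castRingHom (ZMod m)) := by
  ext g i j
  exact map_intCast (ZMod.castHom (dvd_mul_right m n) (ZMod m)) _

lemma splitLiftable_map_of_injOn {m : ℕ} (n : ℕ) {H : Subgroup (GL (Fin 2) ℤ)}
    (hH : Set.InjOn (GeneralLinearGroup.map (Int.castRingHom (ZMod m))) (H : Set (GL (Fin 2) ℤ))) :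
    SplitLiftable m n (H.map (GeneralLinearGroup.map (Int.castRingHom (ZMod m)))) := by
  refine ⟨H.map (GeneralLinearGroup.map (Int.castRingHom (ZMod (m * n)))), ?_, ?_⟩
  · rw [Subgroup.map_map, glRedZMod_comp_map_intCast]
  · rintro _ ⟨a, ha, rfl⟩ _ ⟨b, hb, rfl⟩ hab
    simp only [← MonoidHom.comp_apply, glRedZMod_comp_map_intCast] at hab
    rw [hH ha hb hab]

lemma Subgroup.injOn_of_eq_one {G M : Type*} [Group G] [Group M] {f : G →* M} {H : Subgroup G}
    (h : ∀ g ∈ H, f g = 1 → g = 1) : Set.InjOn f (H : Set G) := by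
  intro a ha b hb hab
  rw [← div_eq_one, ← map_div] at hab
  exact div_eq_one.mp (h _ (div_mem ha hb) hab)

lemma splitLiftable_closure_image (m n : ℕ) (s : Set (GL (Fin 2) ℤ))
    (T : List (Matrix (Fin 2) (Fin 2) ℤ)) (hT_one : 1 ∈ T) (hT_mul : ∀ x ∈ T, ∀ y ∈ T, x * y ∈ T)
    (hs : ∀ g ∈ s, (g : Matrix (Fin 2) (Fin 2) ℤ) ∈ T ∧ ((g⁻¹ : GL (Fin 2) ℤ) : Matrix _ _ ℤ) ∈ T)
    (hT_ker : ∀ X ∈ T, X.map (Int.cast : ℤ → ZMod m) = 1 → X = 1) :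
    SplitLiftable m n
      (Subgroup.closure (GeneralLinearGroup.map (Int.castRingHom (ZMod m)) '' s)) := by
  rw [← MonoidHom.map_closure]
  refine splitLiftable_map_of_injOn n (Subgroup.injOn_of_eq_one fun g hg hg1 => ?_)
  have hgT : (g : Matrix (Fin 2) (Fin 2) ℤ) ∈ T := Units.val_mem_of_mem_closure hT_one hT_mul hs hg
  exact Units.ext (hT_ker _ hgT (congr_arg Units.val hg1))

def glABElements : List (Matrix (Fin 2) (Fin 2) ℤ) :=
  [1, !![0,-1;1,1], !![-1,-1;1,0], !![-1,0;0,-1], !![0,1;-1,-1], !![1,1;-1,0],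
   !![0,1;1,0], !![-1,0;1,1], !![-1,-1;0,1], !![0,-1;-1,0], !![1,0;-1,-1], !![1,1;0,-1]]

def glCDElements : List (Matrix (Fin 2) (Fin 2) ℤ) :=
  [1, !![-1,0;0,-1], !![0,1;-1,0], !![0,-1;1,0], !![1,0;0,-1], !![-1,0;0,1],
   !![0,-1;-1,0], !![0,1;1,0]]

lemma splitLiftable_closure_glA_glB {m : ℕ} (n : ℕ) (hm : 3 ≤ m) :
    SplitLiftable m n (Subgroup.closure {glA (ZMod m), glB (ZMod m)}) := by
  have hsmall : ∀ X ∈ glABElements, ∀ i j, (X i j).natAbs ≤ 1 := by decide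
  have h := splitLiftable_closure_image m n {glA ℤ, glB ℤ} glABElements (by decide) (by decide)
    (by rintro g (rfl | rfl) <;> exact ⟨by decide, by decide⟩)
    (fun X hX => eq_one_of_map_intCast_eq_one hm (hsmall X hX))
  rwa [Set.image_pair, GeneralLinearGroup.map_glA, GeneralLinearGroup.map_glB] at h

lemma splitLiftable_closure_glC_glD {m : ℕ} (n : ℕ) (hm : 3 ≤ m) :
    SplitLiftable m n (Subgroup.closure {glC (ZMod m), glD (ZMod m)}) := by
  have hsmall : ∀ X ∈ glCDElements, ∀ i j, (X i j).natAbs ≤ 1 := by decide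
  have h := splitLiftable_closure_image m n {glC ℤ, glD ℤ} glCDElements (by decide) (by decide)
    (by rintro g (rfl | rfl) <;> exact ⟨by decide, by decide⟩)
    (fun X hX => eq_one_of_map_intCast_eq_one hm (hsmall X hX))
  rwa [Set.image_pair, GeneralLinearGroup.map_glC, GeneralLinearGroup.map_glD] at h

/-- Congruent to `glA` modulo 2 but of order 3 rather than 6, so that together with `glB ℤ` it
generates a copy of `S₃ ≅ GL₂(𝔽₂)`. -/
def glAOrderThree : GL (Fin 2) ℤ := ⟨!![0, -1; 1, -1], !![-1, 1; -1, 0], by decide, by decide⟩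

def glAOrderThreeGlBElements : List (Matrix (Fin 2) (Fin 2) ℤ) :=
  [1, !![0,-1;1,-1], !![-1,1;-1,0], !![0,1;1,0], !![-1,0;-1,1], !![1,-1;0,-1]]

lemma splitLiftable_two_closure_glA_glB (n : ℕ) :
    SplitLiftable 2 n (Subgroup.closure {glA (ZMod 2), glB (ZMod 2)}) := by
  have h := splitLiftable_closure_image 2 n {glAOrderThree, glB ℤ} glAOrderThreeGlBElements
    (by decide) (by decide) (by rintro g (rfl | rfl) <;> exact ⟨by decide, by decide⟩) (by decide)
  have hA : GeneralLinearGroup.map (Int.castRingHom (ZMod 2)) glAOrderThree = glA (ZMod 2) :=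
    Units.ext (by decide)
  rwa [Set.image_pair, hA, GeneralLinearGroup.map_glB] at h

lemma splitLiftable_two_closure_glC_glD (n : ℕ) :
    SplitLiftable 2 n (Subgroup.closure {glC (ZMod 2), glD (ZMod 2)}) := by
  have h := splitLiftable_closure_image 2 n {glB ℤ} [1, !![0,1;1,0]]
    (by decide) (by decide) (by rintro g rfl; exact ⟨by decide, by decide⟩) (by decide)
  have hC : glC (ZMod 2) = 1 := Units.ext (by decide)
  have hD : glD (ZMod 2) = glB (ZMod 2) := Units.ext (by decide)
  rwa [Set.image_singleton, GeneralLinearGroup.map_glB, ← Subgroup.closure_insert_one, ← hC,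
    ← hD] at h

theorem statement_12_general (m n : ℕ) (hm : 2 ≤ m) :
    SplitLiftable m n (Subgroup.closure {glA (ZMod m), glB (ZMod m)}) ∧
    SplitLiftable m n (Subgroup.closure {glC (ZMod m), glD (ZMod m)}) := by
  obtain rfl | hm : m = 2 ∨ 3 ≤ m := by omega
  · exact ⟨splitLiftable_two_closure_glA_glB n, splitLiftable_two_closure_glC_glD n⟩
  · exact ⟨splitLiftable_closure_glA_glB n hm, splitLiftable_closure_glC_glD n hm⟩

theorem statement_12 (m n : ℕ) (hm : 2 ≤ m) (hn : 1 ≤ n) :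
    SplitLiftable m n (Subgroup.closure {glA (ZMod m), glB (ZMod m)}) ∧
    SplitLiftable m n (Subgroup.closure {glC (ZMod m), glD (ZMod m)}) :=
  statement_12_general m n hm
end

section
/- Let p be a prime, k ≥ 1, and let T = [[1,1],[0,1]] ∈ GL₂(ℤ/p^kℤ), an element of order p^k. There exists an element of GL₂(ℤ/p^{k+1}ℤ) of order p^k whose entrywise reduction modulo p^k equals T if and only if p ∈ {2,3} and k = 1. -/
/-! A lift of `T` to `ℤ/p^(k+1)` has the form `1 + n` with `n = N + p^k A`, where
`N = [[0,1],[0,0]]`. Since `N² = 0` and `(p^k)² = p · p^k = 0` there, `n²` is a multiple of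
`p^k`, so `p n² = 0` and `n⁴ = 0`. When `p^k ≥ 4`, `p` divides `C(p^k, 2)` and `C(p^k, 3)`, hence
`(1 + n)^(p^k) = 1 + p^k n = 1 + p^k N = T^(p^k) ≠ 1`. For `p^k ∈ {2, 3}` there are explicit
lifts of order `p^k`. -/

open scoped MatrixGroups

/-- The matrix `T = [[1,1],[0,1]]` as an element of `GL₂(R)`. -/
def glT (R : Type*) [CommRing R] : GL (Fin 2) R :=
  ⟨!![1, 1; 0, 1], !![1, -1; 0, 1],
    by ext i j; fin_cases i <;> fin_cases j <;> norm_num [Matrix.mul_apply, Fin.sum_univ_two],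
    by ext i j; fin_cases i <;> fin_cases j <;> norm_num [Matrix.mul_apply, Fin.sum_univ_two]⟩

section glT

variable (R : Type*) [CommRing R]

theorem val_glT_pow (n : ℕ) : ((glT R ^ n : GL (Fin 2) R) : Matrix (Fin 2) (Fin 2) R) =
    !![1, (n : R); 0, 1] := by
  induction n with
  | zero => simp [Matrix.one_fin_two]
  | succ n ih =>
    rw [pow_succ, Units.val_mul, ih]
    ext i j
    fin_cases i <;> fin_cases j <;> simp [glT, Matrix.mul_apply, Fin.sum_univ_two]; ring

theorem glT_pow_eq_one_iff (n : ℕ) : glT R ^ n = 1 ↔ (n : R) = 0 := by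
  rw [Units.ext_iff, val_glT_pow, Units.val_one, Matrix.one_fin_two]
  simp

theorem orderOf_glT : orderOf (glT R) = ringChar R :=
  eq_of_forall_dvd fun n ↦ by
    rw [orderOf_dvd_iff_pow_eq_one, glT_pow_eq_one_iff, ringChar.spec]

end glT

theorem ZMod.exists_eq_mul_of_castHom_eq_zero {m n : ℕ} [NeZero n] (h : m ∣ n) {x : ZMod n}
    (hx : ZMod.castHom h (ZMod m) x = 0) : ∃ y, x = m * y := by
  rw [← ZMod.natCast_zmod_val x, map_natCast, ZMod.natCast_eq_zero_iff] at hx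
  obtain ⟨c, hc⟩ := hx
  exact ⟨c, by rw [← ZMod.natCast_zmod_val x, hc, Nat.cast_mul]⟩

theorem Matrix.exists_eq_add_smul_of_map_castHom_eq {ι : Type*} {m n : ℕ} [NeZero n] (h : m ∣ n)
    {M M' : Matrix ι ι (ZMod n)}
    (hM : M.map (ZMod.castHom h (ZMod m)) = M'.map (ZMod.castHom h (ZMod m))) :
    ∃ A : Matrix ι ι (ZMod n), M = M' + (m : ZMod n) • A := by
  have (i j : ι) : ∃ y, M i j - M' i j = m * y :=
    ZMod.exists_eq_mul_of_castHom_eq_zero h <| by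
      rw [map_sub, sub_eq_zero]; exact congr_fun₂ hM i j
  choose A hA using this
  exact ⟨Matrix.of A, by ext i j; simp [← hA]⟩

theorem glRedZMod_glT {m n : ℕ} (h : m ∣ n) : glRedZMod h (glT (ZMod n)) = glT (ZMod m) := by
  ext i j; fin_cases i <;> fin_cases j <;> simp [glRedZMod, glT, -ZMod.castHom_apply]

theorem one_add_pow_eq_one_add_nsmul {S : Type*} [Ring S] {x : S} {p m : ℕ} (hx : x ^ 4 = 0)
    (hpx : p • x ^ 2 = 0) (hchoose : ∀ j ∈ Finset.Ico 2 4, p ∣ m.choose j) :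
    (1 + x) ^ m = 1 + m • x := by
  have hterm (j : ℕ) (hj : 2 ≤ j) : m.choose j • x ^ j = 0 := by
    obtain hj4 | hj4 := le_or_gt 4 j
    · rw [← Nat.add_sub_cancel' hj4, pow_add, hx, zero_mul, smul_zero]
    obtain ⟨c, hc⟩ := hchoose j (Finset.mem_Ico.2 ⟨hj, hj4⟩)
    obtain ⟨i, rfl⟩ := Nat.exists_eq_add_of_le hj
    rw [pow_add, hc, mul_comm, mul_smul, ← smul_mul_assoc, hpx, zero_mul, smul_zero]
  rcases m with _ | m
  · simp
  rw [add_comm 1 x, (Commute.one_right x).add_pow]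
  simp_rw [one_pow, mul_one, ← Nat.cast_comm, ← nsmul_eq_mul]
  rw [Finset.eventually_constant_sum hterm (by omega)]
  simp [Finset.sum_range_succ]

theorem one_add_add_smul_pow_eq_one_add_nsmul {R S : Type*} [CommRing R] [Ring S] [Algebra R S]
    {N A : S} {q : R} {p m : ℕ} (hN : N * N = 0) (hq : q * q = 0) (hpq : (p : R) * q = 0)
    (hchoose : ∀ j ∈ Finset.Ico 2 4, p ∣ m.choose j) :
    (1 + (N + q • A)) ^ m = 1 + m • (N + q • A) := by
  have hsq : (N + q • A) ^ 2 = q • (N * A + A * N) := by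
    simp only [pow_two, add_mul, mul_add, hN, smul_mul_assoc, mul_smul_comm, smul_smul, hq,
      zero_smul, smul_add]
    abel
  refine one_add_pow_eq_one_add_nsmul ?_ ?_ hchoose
  · rw [show 4 = 2 * 2 from rfl, pow_mul, hsq, smul_pow, pow_two q, hq, zero_smul]
  · rw [hsq, ← Nat.cast_smul_eq_nsmul R, smul_smul, hpq, zero_smul]

theorem Nat.Prime.eq_two_or_three_of_pow_le_three {p k : ℕ} (hp : p.Prime) (hk : 1 ≤ k)
    (h : p ^ k ≤ 3) : (p = 2 ∨ p = 3) ∧ k = 1 := by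
  have hk1 : k = 1 := by
    by_contra hk1
    have := Nat.pow_le_pow_left hp.two_le k
    have := Nat.pow_le_pow_right (show 0 < 2 by norm_num) (show 2 ≤ k by omega)
    omega
  subst hk1
  rw [pow_one] at h
  have := hp.two_le
  interval_cases p <;> simp_all

theorem pow_eq_glT_pow_of_glRedZMod_eq_glT {p k : ℕ} (hp : p.Prime) (hk : 4 ≤ p ^ k)
    (g : GL (Fin 2) (ZMod (p ^ (k + 1))))
    (hg : glRedZMod (pow_dvd_pow p (Nat.le_succ k)) g = glT (ZMod (p ^ k))) :
    g ^ p ^ k = glT (ZMod (p ^ (k + 1))) ^ p ^ k := by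
  have : NeZero (p ^ (k + 1)) := ⟨pow_ne_zero _ hp.ne_zero⟩
  have hk0 : k ≠ 0 := by rintro rfl; simp at hk
  set q : ZMod (p ^ (k + 1)) := ((p ^ k : ℕ) : ZMod (p ^ (k + 1))) with hq
  have hqq : q * q = 0 := by
    rw [hq, ← Nat.cast_mul, ZMod.natCast_eq_zero_iff, ← pow_add]
    exact pow_dvd_pow p (by omega)
  have hpq : (p : ZMod (p ^ (k + 1))) * q = 0 := by
    rw [hq, ← Nat.cast_mul, ZMod.natCast_eq_zero_iff, pow_succ']
  rw [← glRedZMod_glT (pow_dvd_pow p (Nat.le_succ k))] at hg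
  obtain ⟨A, hA⟩ := Matrix.exists_eq_add_smul_of_map_castHom_eq
    (pow_dvd_pow p (Nat.le_succ k)) (congr_arg Units.val hg)
  set N : Matrix (Fin 2) (Fin 2) (ZMod (p ^ (k + 1))) := !![0, 1; 0, 0]
  have hN : N * N = 0 := by ext i j; fin_cases i <;> fin_cases j <;> simp [N]
  have hgN : (g : Matrix (Fin 2) (Fin 2) _) = 1 + (N + q • A) := by
    rw [hA, ← add_assoc]; congr 1; ext i j; fin_cases i <;> fin_cases j <;> simp [N, glT]
  have hchoose (j : ℕ) (hj : j ∈ Finset.Ico 2 4) : p ∣ (p ^ k).choose j := by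
    rw [Finset.mem_Ico] at hj
    exact hp.dvd_choose_pow (by omega) (by omega)
  rw [Units.ext_iff, Units.val_pow_eq_pow_val, hgN,
    one_add_add_smul_pow_eq_one_add_nsmul hN hqq hpq hchoose,
    val_glT_pow, ← Nat.cast_smul_eq_nsmul (ZMod (p ^ (k + 1))), ← hq, smul_add, smul_smul, hqq,
    zero_smul, add_zero]
  ext i j; fin_cases i <;> fin_cases j <;> simp [N]

theorem exists_glT_lift_two : ∃ g : GL (Fin 2) (ZMod (2 ^ (1 + 1))),
    orderOf g = 2 ^ 1 ∧ glRedZMod (pow_dvd_pow 2 (Nat.le_succ 1)) g = glT (ZMod (2 ^ 1)) := by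
  refine ⟨⟨!![3, 1; 0, 1], !![3, 1; 0, 1], by decide, by decide⟩, ?_,
    by rw [Units.ext_iff]; decide⟩
  have := Fact.mk Nat.prime_two
  exact orderOf_eq_prime (by rw [Units.ext_iff]; decide) (by rw [Ne, Units.ext_iff]; decide)

theorem exists_glT_lift_three : ∃ g : GL (Fin 2) (ZMod (3 ^ (1 + 1))),
    orderOf g = 3 ^ 1 ∧ glRedZMod (pow_dvd_pow 3 (Nat.le_succ 1)) g = glT (ZMod (3 ^ 1)) := by
  refine ⟨⟨!![1, 1; 6, 1], !![7, 2; 3, 7], by decide, by decide⟩, ?_,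
    by rw [Units.ext_iff]; decide⟩
  have := Fact.mk Nat.prime_three
  exact orderOf_eq_prime (by rw [Units.ext_iff]; decide) (by rw [Ne, Units.ext_iff]; decide)

theorem statement_13 (p k : ℕ) (hp : p.Prime) (hk : 1 ≤ k) :
    orderOf (glT (ZMod (p ^ k))) = p ^ k ∧
    ((∃ g : GL (Fin 2) (ZMod (p ^ (k + 1))),
        orderOf g = p ^ k ∧
        glRedZMod (pow_dvd_pow p (Nat.le_succ k)) g = glT (ZMod (p ^ k))) ↔
      ((p = 2 ∨ p = 3) ∧ k = 1)) := by
  refine ⟨by rw [orderOf_glT, ZMod.ringChar_zmod_n], fun ⟨g, hord, hg⟩ ↦ ?_, ?_⟩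
  · by_contra h
    have hk4 : 4 ≤ p ^ k := by
      by_contra hlt
      exact h (hp.eq_two_or_three_of_pow_le_three hk (by omega))
    have hgk := pow_orderOf_eq_one g
    rw [hord, pow_eq_glT_pow_of_glRedZMod_eq_glT hp hk4 g hg, glT_pow_eq_one_iff,
      ZMod.natCast_eq_zero_iff, Nat.pow_dvd_pow_iff_le_right hp.one_lt] at hgk
    omega
  · rintro ⟨rfl | rfl, rfl⟩
    exacts [exists_glT_lift_two, exists_glT_lift_three]
end
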